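/- arXiv:1205.2824 — 7 statements merged into one kernel-verified Lean document; each statement's English description precedes it below -/
import Mathlib

section
/- Let G be a finite group and H a subgroup of G. The number of elements x in G such that x^2 ∈ H is divisible by the order of H. -/
section Aux

variable {G : Type*} [Group G]

lemma fiber_rel (x h₁ h₂ m₁ m₂ : G)
    (heq : h₁ * x⁻¹ * m₁ * h₁⁻¹ = h₂ * x⁻¹ * m₂ * h₂⁻¹) :
    m₂ = x * (h₁⁻¹ * h₂)⁻¹ * x⁻¹ * m₁ * (h₁⁻¹ * h₂) := by
  have h : m₂ = x * h₂⁻¹ * (h₂ * x⁻¹ * m₂ * h₂⁻¹) * h₂ := by group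
  rw [← heq] at h
  rw [h]; group

lemma card_eq_sum_fibers {α β : Type*} [Fintype α] [Fintype β] (f : α → β) :
    Nat.card α = ∑ y : β, Nat.card {x // f x = y} := by
  classical
  simp only [Nat.card_eq_fintype_card]
  rw [← Fintype.card_sigma]
  exact Fintype.card_congr (Equiv.sigmaFiberEquiv f).symm

variable [Fintype G] (H : Subgroup G)

lemma key (x : G) (hx : x ^ 2 ∈ H) :
    Nat.card {y : G // y ^ 2 ∈ H ∧ ∃ h ∈ H, ∃ k ∈ H, y = h * x * k} = Nat.card H := by
  classical
  set K : Type _ := {u : G // u ∈ H ∧ x * u * x⁻¹ ∈ H} with hKdef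
  set SD : Type _ := {y : G // y ^ 2 ∈ H ∧ ∃ h ∈ H, ∃ k ∈ H, y = h * x * k} with hSDdef
  have hx2 : (x ^ 2)⁻¹ ∈ H := inv_mem hx
  -- the map Φ
  have memSD : ∀ (h : H) (m : K), ((h : G) * x⁻¹ * m * (h : G)⁻¹) ^ 2 ∈ H ∧
      ∃ a ∈ H, ∃ b ∈ H, (h : G) * x⁻¹ * (m : G) * (h : G)⁻¹ = a * x * b := by
    intro h m
    constructor
    · have e : ((h : G) * x⁻¹ * (m : G) * (h : G)⁻¹) ^ 2
          = (h : G) * ((x ^ 2)⁻¹ * (x * m * x⁻¹) * m) * (h : G)⁻¹ := by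
        simp only [pow_two]; group
      rw [e]
      exact mul_mem (mul_mem h.2 (mul_mem (mul_mem hx2 m.2.2) m.2.1)) (inv_mem h.2)
    · refine ⟨h, h.2, (x ^ 2)⁻¹ * m * (h : G)⁻¹, mul_mem (mul_mem hx2 m.2.1) (inv_mem h.2), ?_⟩
      group
  let Φ : H × K → SD := fun p => ⟨(p.1 : G) * x⁻¹ * p.2 * (p.1 : G)⁻¹, memSD p.1 p.2⟩
  have Φsurj : Function.Surjective Φ := by
    rintro ⟨y, hy2, h, hh, k, hk, rfl⟩
    have hmH : x ^ 2 * k * h ∈ H := mul_mem (mul_mem hx hk) hh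
    have hkey : x * k * h * x ∈ H := by
      have e : x * k * h * x = h⁻¹ * ((h * x * k) ^ 2) * k⁻¹ := by
        simp only [pow_two]; group
      rw [e]; exact mul_mem (mul_mem (inv_mem hh) hy2) (inv_mem hk)
    have hmK : x * (x ^ 2 * k * h) * x⁻¹ ∈ H := by
      have e : x * (x ^ 2 * k * h) * x⁻¹ = x ^ 2 * (x * k * h * x) * (x ^ 2)⁻¹ := by group
      rw [e]; exact mul_mem (mul_mem hx hkey) hx2
    refine ⟨(⟨h, hh⟩, ⟨x ^ 2 * k * h, hmH, hmK⟩), ?_⟩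
    apply Subtype.ext
    show h * x⁻¹ * (x ^ 2 * k * h) * h⁻¹ = h * x * k
    group
  obtain ⟨σ, hσ⟩ := Φsurj.hasRightInverse
  -- each fiber of Φ is equivalent to K
  have fiberEquiv : ∀ y : SD, Nonempty (K ≃ {p : H × K // Φ p = y}) := by
    intro y
    set h₀ : G := ((σ y).1 : G) with hh0
    set m₀ : G := ((σ y).2 : G) with hm0
    have hh₀H : h₀ ∈ H := (σ y).1.2
    have hm₀H : m₀ ∈ H := (σ y).2.2.1
    have hm₀K : x * m₀ * x⁻¹ ∈ H := (σ y).2.2.2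
    have hyval : (y : G) = h₀ * x⁻¹ * m₀ * h₀⁻¹ := by
      conv_lhs => rw [← hσ y]
    -- forward map
    have fwd_memH : ∀ u : K, x * (u : G)⁻¹ * x⁻¹ * m₀ * u ∈ H := by
      intro u
      have e : x * (u : G)⁻¹ * x⁻¹ * m₀ * u
          = (x * u * x⁻¹)⁻¹ * m₀ * u := by group
      rw [e]; exact mul_mem (mul_mem (inv_mem u.2.2) hm₀H) u.2.1
    have fwd_memK : ∀ u : K, x * (x * (u : G)⁻¹ * x⁻¹ * m₀ * u) * x⁻¹ ∈ H := by
      intro u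
      have e : x * (x * (u : G)⁻¹ * x⁻¹ * m₀ * u) * x⁻¹
          = (x ^ 2 * (u : G)⁻¹ * (x ^ 2)⁻¹) * (x * m₀ * x⁻¹) * ((x : G) * u * x⁻¹) := by
        simp only [pow_two]; group
      rw [e]
      exact mul_mem (mul_mem (mul_mem (mul_mem hx (inv_mem u.2.1)) hx2) hm₀K) u.2.2
    have fwd_fib : ∀ u : K,
        Φ (⟨h₀ * u, mul_mem hh₀H u.2.1⟩, ⟨x * (u : G)⁻¹ * x⁻¹ * m₀ * u, fwd_memH u, fwd_memK u⟩) = y := by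
      intro u
      apply Subtype.ext
      show (h₀ * u) * x⁻¹ * (x * (u : G)⁻¹ * x⁻¹ * m₀ * u) * (h₀ * u)⁻¹ = (y : G)
      rw [hyval]; group
    refine ⟨{
      toFun := fun u => ⟨(⟨h₀ * u, mul_mem hh₀H u.2.1⟩,
        ⟨x * (u : G)⁻¹ * x⁻¹ * m₀ * u, fwd_memH u, fwd_memK u⟩), fwd_fib u⟩
      invFun := fun p => ⟨h₀⁻¹ * (p.1.1 : G), ?_, ?_⟩
      left_inv := ?_
      right_inv := ?_ }⟩
    · exact mul_mem (inv_mem hh₀H) p.1.1.2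
    · -- x * (h₀⁻¹ * h) * x⁻¹ ∈ H
      have heq : h₀ * x⁻¹ * m₀ * h₀⁻¹
          = (p.1.1 : G) * x⁻¹ * (p.1.2 : G) * (p.1.1 : G)⁻¹ := by
        rw [← hyval]
        exact congrArg Subtype.val p.2 |>.symm
      have hm := fiber_rel x h₀ (p.1.1 : G) m₀ (p.1.2 : G) heq
      have e : x * (h₀⁻¹ * (p.1.1 : G)) * x⁻¹
          = m₀ * (h₀⁻¹ * (p.1.1 : G)) *
            (x * (h₀⁻¹ * (p.1.1 : G))⁻¹ * x⁻¹ * m₀ * (h₀⁻¹ * (p.1.1 : G)))⁻¹ := by group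
      rw [e, ← hm]
      exact mul_mem (mul_mem hm₀H (mul_mem (inv_mem hh₀H) p.1.1.2)) (inv_mem p.1.2.2.1)
    · intro u
      apply Subtype.ext
      show h₀⁻¹ * (h₀ * (u : G)) = (u : G)
      group
    · intro p
      apply Subtype.ext
      have heq : h₀ * x⁻¹ * m₀ * h₀⁻¹
          = (p.1.1 : G) * x⁻¹ * (p.1.2 : G) * (p.1.1 : G)⁻¹ := by
        rw [← hyval]
        exact congrArg Subtype.val p.2 |>.symm
      have hm := fiber_rel x h₀ (p.1.1 : G) m₀ (p.1.2 : G) heq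
      apply Prod.ext
      · apply Subtype.ext
        show h₀ * (h₀⁻¹ * (p.1.1 : G)) = (p.1.1 : G)
        group
      · apply Subtype.ext
        show x * (h₀⁻¹ * (p.1.1 : G))⁻¹ * x⁻¹ * m₀ * (h₀⁻¹ * (p.1.1 : G)) = (p.1.2 : G)
        exact hm.symm
  -- counting
  have hcard : Nat.card (H × K) = ∑ y : SD, Nat.card {p : H × K // Φ p = y} :=
    card_eq_sum_fibers Φ
  have hfib : ∀ y : SD, Nat.card {p : H × K // Φ p = y} = Nat.card K := by
    intro y
    exact (Nat.card_congr (fiberEquiv y).some).symm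
  rw [Finset.sum_congr rfl (fun y _ => hfib y), Finset.sum_const, Finset.card_univ,
    smul_eq_mul, Nat.card_prod] at hcard
  have hKne : Nonempty K := ⟨⟨1, one_mem H, by simpa using one_mem H⟩⟩
  have hKpos : 0 < Nat.card K := Nat.card_pos
  rw [Nat.card_eq_fintype_card]
  exact Nat.eq_of_mul_eq_mul_right hKpos hcard.symm

end Aux

theorem stmt_0 (G : Type*) [Group G] [Fintype G] (H : Subgroup G) :
    Nat.card H ∣ Nat.card {x : G // x ^ 2 ∈ H} := by
  classical
  set S : Type _ := {x : G // x ^ 2 ∈ H} with hSdef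
  let s : Setoid S := ⟨fun a b => ∃ h ∈ H, ∃ k ∈ H, (a : G) = h * b * k, by
    constructor
    · intro a; exact ⟨1, one_mem H, 1, one_mem H, by group⟩
    · rintro a b ⟨h, hh, k, hk, e⟩
      exact ⟨h⁻¹, inv_mem hh, k⁻¹, inv_mem hk, by rw [e]; group⟩
    · rintro a b c ⟨h, hh, k, hk, e⟩ ⟨h', hh', k', hk', e'⟩
      exact ⟨h * h', mul_mem hh hh', k' * k, mul_mem hk' hk, by rw [e, e']; group⟩⟩
  have hcard : Nat.card S = ∑ c : Quotient s, Nat.card {a : S // Quotient.mk s a = c} :=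
    card_eq_sum_fibers (Quotient.mk s)
  have hfib : ∀ c : Quotient s, Nat.card {a : S // Quotient.mk s a = c} = Nat.card H := by
    intro c
    have e : {a : S // Quotient.mk s a = c} ≃
        {y : G // y ^ 2 ∈ H ∧ ∃ h ∈ H, ∃ k ∈ H, y = h * ((c.out : S) : G) * k} :=
      { toFun := fun a => ⟨(a.1 : G), a.1.2, Quotient.mk_eq_iff_out.mp a.2⟩
        invFun := fun y => ⟨⟨y.1, y.2.1⟩, Quotient.mk_eq_iff_out.mpr y.2.2⟩
        left_inv := fun a => by apply Subtype.ext; apply Subtype.ext; rfl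
        right_inv := fun y => rfl }
    rw [Nat.card_congr e]
    exact key H ((c.out : S) : G) (c.out).2
  rw [hcard, Finset.sum_congr rfl (fun c _ => hfib c), Finset.sum_const, Finset.card_univ,
    smul_eq_mul]
  exact dvd_mul_left _ _
end

section
/- In any finite group G, the number of pairs (x,y) ∈ G² satisfying both x²y³x⁻¹y⁻¹xy·y⁻¹ = 1 and (yx)² = 1 is divisible by |G|. -/
/- We prove an instance of the Gordon–Rodriguez-Villegas theorem:
the system x²y³[x,y]y⁻¹ = 1, (yx)² = 1 is equivalent to x⁴y⁴ = 1, (yx)² = 1,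
whose exponent matrix has rank 1 < 2, so the number of solutions is divisible
by |G|.  Proof: partition solutions according to the "ℤ-graded data"
k ↦ yᵏ(xy)y⁻ᵏ up to simultaneous conjugation; each class has size exactly |G|. -/

namespace GRV4

variable {G : Type*} [Group G]

/-- the simplified system -/
def P (p : G × G) : Prop := p.1 ^ 4 * p.2 ^ 4 = 1 ∧ (p.2 * p.1) ^ 2 = 1

/-- the ℤ-graded data of a pair -/
def dd (p : G × G) (k : ℤ) : G := p.2 ^ k * (p.1 * p.2) * p.2 ^ (-k)

lemma dd_zero (p : G × G) : dd p 0 = p.1 * p.2 := by simp [dd]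

lemma dd_shift (p : G × G) (m k : ℤ) :
    dd p (k + m) = p.2 ^ m * dd p k * p.2 ^ (-m) := by
  simp only [dd]; group

lemma dd_cj (h : G) (p : G × G) (k : ℤ) :
    dd (h * p.1 * h⁻¹, h * p.2 * h⁻¹) k = h * dd p k * h⁻¹ := by
  simp only [dd, conj_zpow]; group

/-- identity expressing x⁴y⁴ through the data -/
lemma idA (p : G × G) :
    p.1 ^ 4 * p.2 ^ 4 = dd p 0 * dd p (-1) * dd p (-2) * dd p (-3) := by
  simp only [dd]
  group
  rw [show p.1 * p.1 * p.1 * p.1 = p.1 ^ (4:ℤ) by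
    rw [show (4:ℤ) = ((4:ℕ):ℤ) from rfl, zpow_natCast, pow_succ, pow_succ, pow_succ, pow_one]]

/-- identity expressing (yx)² through the data -/
lemma idB (p : G × G) : (p.2 * p.1) ^ 2 = (dd p 1) ^ 2 := by
  simp only [dd]; group

/-- the centralizer of the data -/
def Zc (p : G × G) : Subgroup G := Subgroup.centralizer (Set.range (dd p))

lemma mem_Zc {p : G × G} {c : G} : c ∈ Zc p ↔ ∀ k, dd p k * c = c * dd p k := by
  constructor
  · intro hc k
    exact Subgroup.mem_centralizer_iff.mp hc _ ⟨k, rfl⟩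
  · intro hc
    exact Subgroup.mem_centralizer_iff.mpr (by rintro g ⟨k, rfl⟩; exact hc k)

lemma conj_mem_Zc {p : G × G} {c : G} (hc : c ∈ Zc p) (m : ℤ) :
    p.2 ^ m * c * p.2 ^ (-m) ∈ Zc p := by
  rw [mem_Zc]
  intro k
  have h1 : dd p k = p.2 ^ m * dd p (k - m) * p.2 ^ (-m) := by
    have := dd_shift p m (k - m)
    rwa [sub_add_cancel] at this
  have h2 := mem_Zc.mp hc (k - m)
  calc dd p k * (p.2 ^ m * c * p.2 ^ (-m))
      = p.2 ^ m * (dd p (k - m) * c) * p.2 ^ (-m) := by rw [h1]; group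
    _ = p.2 ^ m * (c * dd p (k - m)) * p.2 ^ (-m) := by rw [h2]
    _ = (p.2 ^ m * c * p.2 ^ (-m)) * (p.2 ^ m * dd p (k - m) * p.2 ^ (-m)) := by group
    _ = (p.2 ^ m * c * p.2 ^ (-m)) * dd p k := by rw [← h1]

lemma pow_mem_aux {p : G × G} {c : G} (hc : c ∈ Zc p) (k : ℤ) :
    ∃ u ∈ Zc p, (p.2 * c) ^ k = u * p.2 ^ k := by
  induction k using Int.induction_on with
  | zero => exact ⟨1, one_mem _, by simp⟩
  | succ n ih =>
    obtain ⟨u, hu, he⟩ := ih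
    refine ⟨u * (p.2 ^ ((n : ℤ) + 1) * c * p.2 ^ (-((n : ℤ) + 1))),
      mul_mem hu (conj_mem_Zc hc _), ?_⟩
    rw [zpow_add_one, he]
    group
  | pred n ih =>
    obtain ⟨u, hu, he⟩ := ih
    refine ⟨u * (p.2 ^ (-(n : ℤ)) * c⁻¹ * p.2 ^ ((n : ℤ))), mul_mem hu ?_, ?_⟩
    · simpa using conj_mem_Zc (inv_mem hc) (-(n : ℤ))
    · rw [zpow_sub_one, he]
      group

/-- twist of a solution by a central-in-data element -/
def twc (p : G × G) (c : G) : G × G := (p.1 * p.2 * c⁻¹ * p.2⁻¹, p.2 * c)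

lemma dd_twc {p : G × G} {c : G} (hc : c ∈ Zc p) (k : ℤ) :
    dd (twc p c) k = dd p k := by
  obtain ⟨u, hu, he⟩ := pow_mem_aux hc k
  have he' : (p.2 * c) ^ (-k) = p.2 ^ (-k) * u⁻¹ := by
    rw [zpow_neg, he, mul_inv_rev, ← zpow_neg]
  have h2 : dd (twc p c) k = u * dd p k * u⁻¹ := by
    simp only [dd, twc]
    rw [he, he']
    group
  have h3 := mem_Zc.mp hu k
  rw [h2, ← h3]
  group

lemma P_twc {p : G × G} (hp : P p) {c : G} (hc : c ∈ Zc p) : P (twc p c) := by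
  obtain ⟨h1, h2⟩ := hp
  constructor
  · rw [idA, dd_twc hc, dd_twc hc, dd_twc hc, dd_twc hc, ← idA]
    exact h1
  · rw [idB, dd_twc hc, ← idB]
    exact h2

/-- conjugation of a pair -/
def cj (h : G) (p : G × G) : G × G := (h * p.1 * h⁻¹, h * p.2 * h⁻¹)

lemma dd_cj' (h : G) (p : G × G) (k : ℤ) : dd (cj h p) k = h * dd p k * h⁻¹ :=
  dd_cj h p k

lemma P_cj {p : G × G} (hp : P p) (h : G) : P (cj h p) := by
  obtain ⟨h1, h2⟩ := hp
  constructor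
  · have e : (cj h p).1 ^ 4 * (cj h p).2 ^ 4 = h * (p.1 ^ 4 * p.2 ^ 4) * h⁻¹ := by
      simp only [cj, conj_pow]
      group
    rw [e, h1]; group
  · have e : ((cj h p).2 * (cj h p).1) ^ 2 = h * ((p.2 * p.1) ^ 2) * h⁻¹ := by
      have e1 : (cj h p).2 * (cj h p).1 = h * (p.2 * p.1) * h⁻¹ := by
        simp only [cj]; group
      rw [e1, conj_pow]
    rw [e, h2]; group

variable (G) in
/-- the solution set -/
def Sol := {p : G × G // P p}

variable (G) in
/-- same data up to simultaneous conjugation -/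
def Rel (a b : Sol G) : Prop := ∃ h : G, ∀ k, dd b.1 k = h * dd a.1 k * h⁻¹

lemma Rel.refl (a : Sol G) : Rel G a a := ⟨1, fun k => by group⟩

lemma Rel.symm' {a b : Sol G} (hab : Rel G a b) : Rel G b a := by
  obtain ⟨h, hh⟩ := hab
  exact ⟨h⁻¹, fun k => by rw [hh k]; group⟩

lemma Rel.trans' {a b c : Sol G} (hab : Rel G a b) (hbc : Rel G b c) : Rel G a c := by
  obtain ⟨h1, hh1⟩ := hab
  obtain ⟨h2, hh2⟩ := hbc
  exact ⟨h2 * h1, fun k => by rw [hh2 k, hh1 k]; group⟩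

variable (G) in
/-- the class of a solution -/
def Cl (a : Sol G) := {b : Sol G // Rel G a b}

/-- the parametrization of a class -/
def Bmap (a : Sol G) (v : G × (Zc a.1)) : Cl G a :=
  ⟨⟨cj v.1 (twc a.1 v.2), P_cj (P_twc a.2 v.2.2) v.1⟩,
    ⟨v.1, fun k => by rw [dd_cj', dd_twc v.2.2]⟩⟩

lemma Bmap_val (a : Sol G) (v : G × (Zc a.1)) :
    (Bmap a v).1.1 = cj v.1 (twc a.1 v.2) := rfl

lemma dd_Bmap (a : Sol G) (v : G × (Zc a.1)) (k : ℤ) :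
    dd (Bmap a v).1.1 k = v.1 * dd a.1 k * v.1⁻¹ := by
  rw [Bmap_val, dd_cj', dd_twc v.2.2]

lemma Bmap_surj (a : Sol G) : Function.Surjective (Bmap a) := by
  rintro ⟨⟨q, hq⟩, hrel⟩
  obtain ⟨h, hh⟩ := hrel
  set x₀ := a.1.1 with hx₀
  set y₀ := a.1.2 with hy₀
  set z := h⁻¹ * q.2 * h with hz
  have F0 : h⁻¹ * (q.1 * q.2) * h = x₀ * y₀ := by
    have h0 := hh 0
    rw [dd_zero, dd_zero] at h0
    rw [h0]; group
    rfl
  have hzc : ∀ k : ℤ, z ^ k = h⁻¹ * q.2 ^ k * h := by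
    intro k
    have : z = h⁻¹ * q.2 * (h⁻¹)⁻¹ := by rw [hz, inv_inv]
    rw [this, conj_zpow, inv_inv]
  have F1 : ∀ k : ℤ, z ^ k * (x₀ * y₀) * z ^ (-k) = dd a.1 k := by
    intro k
    have e1 : z ^ k * (x₀ * y₀) * z ^ (-k) = h⁻¹ * dd q k * h := by
      rw [hzc k, hzc (-k), ← F0]
      simp only [dd]
      group
    rw [e1, hh k]
    group
  have hcmem : y₀⁻¹ * z ∈ Zc a.1 := by
    rw [mem_Zc]
    intro k
    have e2 : z * (z ^ k * (x₀ * y₀) * z ^ (-k)) * z⁻¹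
        = z ^ (k + 1) * (x₀ * y₀) * z ^ (-(k + 1)) := by group
    have e3 : dd a.1 k = y₀⁻¹ * dd a.1 (k + 1) * y₀ := by
      have := dd_shift a.1 (-1) (k + 1)
      simp only [add_neg_cancel_right, zpow_neg_one, neg_neg, zpow_one] at this
      rw [← hy₀] at this
      exact this
    have key : (y₀⁻¹ * z) * dd a.1 k * (y₀⁻¹ * z)⁻¹ = dd a.1 k := by
      calc (y₀⁻¹ * z) * dd a.1 k * (y₀⁻¹ * z)⁻¹
          = y₀⁻¹ * (z * (z ^ k * (x₀ * y₀) * z ^ (-k)) * z⁻¹) * y₀ := by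
            rw [F1 k]; group
        _ = y₀⁻¹ * (z ^ (k + 1) * (x₀ * y₀) * z ^ (-(k + 1))) * y₀ := by rw [e2]
        _ = y₀⁻¹ * dd a.1 (k + 1) * y₀ := by rw [F1 (k + 1)]
        _ = dd a.1 k := e3.symm
    calc dd a.1 k * (y₀⁻¹ * z)
        = ((y₀⁻¹ * z) * dd a.1 k * (y₀⁻¹ * z)⁻¹) * (y₀⁻¹ * z) := by rw [key]
      _ = (y₀⁻¹ * z) * dd a.1 k := by group
  refine ⟨⟨h, ⟨y₀⁻¹ * z, hcmem⟩⟩, ?_⟩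
  apply Subtype.ext
  apply Subtype.ext
  rw [Bmap_val]
  have c2 : h * (y₀ * (y₀⁻¹ * z)) * h⁻¹ = q.2 := by rw [hz]; group
  have c1 : h * (x₀ * y₀ * (y₀⁻¹ * z)⁻¹ * y₀⁻¹) * h⁻¹ = q.1 := by
    have e4 : h * (x₀ * y₀ * (y₀⁻¹ * z)⁻¹ * y₀⁻¹) * h⁻¹
        = (h * (x₀ * y₀) * h⁻¹) * (h * z⁻¹ * h⁻¹) := by group
    have e5 : h * (x₀ * y₀) * h⁻¹ = q.1 * q.2 := by rw [← F0]; group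
    have e6 : h * z⁻¹ * h⁻¹ = q.2⁻¹ := by rw [hz]; group
    rw [e4, e5, e6]
    group
  show ((h * (x₀ * y₀ * (y₀⁻¹ * z)⁻¹ * y₀⁻¹) * h⁻¹, h * (y₀ * (y₀⁻¹ * z)) * h⁻¹) : G × G) = q
  rw [c1, c2]

lemma fiber_equiv (a : Sol G) (q : Cl G a) :
    Nonempty ({v : G × (Zc a.1) // Bmap a v = q} ≃ (Zc a.1)) := by
  obtain ⟨⟨h, c⟩, rfl⟩ := Bmap_surj a q
  have conj_mem : ∀ u : G, u ∈ Zc a.1 → a.1.2⁻¹ * u * a.1.2 ∈ Zc a.1 := by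
    intro u hu
    simpa using conj_mem_Zc hu (-1)
  have toFiber : ∀ u : Zc a.1,
      Bmap a (h * (u : G)⁻¹, ⟨a.1.2⁻¹ * u * a.1.2 * c * (u : G)⁻¹,
        mul_mem (mul_mem (conj_mem u u.2) c.2) (inv_mem u.2)⟩) = Bmap a (h, c) := by
    intro u
    have hug : (a.1.1 * a.1.2) * u = u * (a.1.1 * a.1.2) := by
      have := mem_Zc.mp u.2 0
      rwa [dd_zero] at this
    apply Subtype.ext
    apply Subtype.ext
    show ((h * (u : G)⁻¹) * (a.1.1 * a.1.2 * (a.1.2⁻¹ * (u : G) * a.1.2 * (c : G) * (u : G)⁻¹)⁻¹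
          * a.1.2⁻¹) * (h * (u : G)⁻¹)⁻¹,
        (h * (u : G)⁻¹) * (a.1.2 * (a.1.2⁻¹ * (u : G) * a.1.2 * (c : G) * (u : G)⁻¹))
          * (h * (u : G)⁻¹)⁻¹)
      = ((h * (a.1.1 * a.1.2 * (c : G)⁻¹ * a.1.2⁻¹) * h⁻¹, h * (a.1.2 * (c : G)) * h⁻¹) : G × G)
    rw [Prod.mk.injEq]
    refine ⟨?_, ?_⟩
    · calc (h * (u : G)⁻¹) * (a.1.1 * a.1.2
            * (a.1.2⁻¹ * (u : G) * a.1.2 * (c : G) * (u : G)⁻¹)⁻¹ * a.1.2⁻¹) * (h * (u : G)⁻¹)⁻¹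
          = h * ((u : G)⁻¹ * ((a.1.1 * a.1.2) * (u : G))) * ((c : G)⁻¹ * a.1.2⁻¹) * h⁻¹ := by
            group
        _ = h * ((u : G)⁻¹ * ((u : G) * (a.1.1 * a.1.2))) * ((c : G)⁻¹ * a.1.2⁻¹) * h⁻¹ := by
            rw [hug]
        _ = h * (a.1.1 * a.1.2 * (c : G)⁻¹ * a.1.2⁻¹) * h⁻¹ := by group
    · group
  refine ⟨Equiv.symm (Equiv.ofBijective
    (fun u => ⟨(h * (u : G)⁻¹, ⟨a.1.2⁻¹ * u * a.1.2 * c * (u : G)⁻¹,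
      mul_mem (mul_mem (conj_mem u u.2) c.2) (inv_mem u.2)⟩), toFiber u⟩) ⟨?_, ?_⟩)⟩
  · -- injective
    intro u u' huu
    have h9 := congrArg (fun w : {v : G × (Zc a.1) // Bmap a v = Bmap a (h, c)} => w.1.1) huu
    simp only at h9
    exact Subtype.ext (inv_injective (mul_left_cancel h9))
  · -- surjective
    rintro ⟨⟨h', c'⟩, hv⟩
    have hdd : ∀ k, h' * dd a.1 k * h'⁻¹ = h * dd a.1 k * h⁻¹ := by
      intro k
      have e1 : dd (Bmap a (h', c')).1.1 k = dd (Bmap a (h, c)).1.1 k := by rw [hv]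
      rw [dd_Bmap, dd_Bmap] at e1
      exact e1
    have hum : h'⁻¹ * h ∈ Zc a.1 := by
      rw [mem_Zc]
      intro k
      have e4 : (h'⁻¹ * h) * dd a.1 k * (h'⁻¹ * h)⁻¹ = dd a.1 k := by
        calc (h'⁻¹ * h) * dd a.1 k * (h'⁻¹ * h)⁻¹
            = h'⁻¹ * (h * dd a.1 k * h⁻¹) * h' := by group
          _ = h'⁻¹ * (h' * dd a.1 k * h'⁻¹) * h' := by rw [← hdd k]
          _ = dd a.1 k := by group
      calc dd a.1 k * (h'⁻¹ * h)
          = ((h'⁻¹ * h) * dd a.1 k * (h'⁻¹ * h)⁻¹) * (h'⁻¹ * h) := by rw [e4]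
        _ = (h'⁻¹ * h) * dd a.1 k := by group
    have hvals : (Bmap a (h', c')).1.1 = (Bmap a (h, c)).1.1 := by rw [hv]
    have hy : h' * (a.1.2 * (c' : G)) * h'⁻¹ = h * (a.1.2 * (c : G)) * h⁻¹ := by
      have h8 := congrArg Prod.snd hvals
      exact h8
    have hc' : (c' : G) = a.1.2⁻¹ * (h'⁻¹ * h) * a.1.2 * c * (h'⁻¹ * h)⁻¹ := by
      have e5 : a.1.2 * (c' : G) = (h'⁻¹ * h) * (a.1.2 * c) * (h'⁻¹ * h)⁻¹ := by
        calc a.1.2 * (c' : G) = h'⁻¹ * (h' * (a.1.2 * c') * h'⁻¹) * h' := by group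
          _ = h'⁻¹ * (h * (a.1.2 * c) * h⁻¹) * h' := by rw [hy]
          _ = (h'⁻¹ * h) * (a.1.2 * c) * (h'⁻¹ * h)⁻¹ := by group
      calc (c' : G) = a.1.2⁻¹ * (a.1.2 * (c' : G)) := by group
        _ = a.1.2⁻¹ * ((h'⁻¹ * h) * (a.1.2 * c) * (h'⁻¹ * h)⁻¹) := by rw [e5]
        _ = a.1.2⁻¹ * (h'⁻¹ * h) * a.1.2 * c * (h'⁻¹ * h)⁻¹ := by group
    refine ⟨⟨h'⁻¹ * h, hum⟩, ?_⟩
    apply Subtype.ext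
    show ((h * (h'⁻¹ * h)⁻¹, _) : G × (Zc a.1)) = (h', c')
    rw [Prod.mk.injEq]
    refine ⟨by group, Subtype.ext ?_⟩
    show a.1.2⁻¹ * (h'⁻¹ * h) * a.1.2 * c * (h'⁻¹ * h)⁻¹ = (c' : G)
    exact hc'.symm

lemma card_Cl [Fintype G] (a : Sol G) : Nat.card (Cl G a) = Nat.card G := by
  classical
  have E : ∀ q : Cl G a, {v : G × (Zc a.1) // Bmap a v = q} ≃ (Zc a.1) :=
    fun q => (fiber_equiv a q).some
  have e2 : (G × (Zc a.1)) ≃ (Cl G a) × (Zc a.1) :=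
    (Equiv.sigmaFiberEquiv (Bmap a)).symm.trans (Equiv.sigmaEquivProdOfEquiv E)
  have hcard := Nat.card_congr e2
  rw [Nat.card_prod, Nat.card_prod] at hcard
  haveI : Nonempty (Zc a.1) := ⟨1⟩
  exact (Nat.eq_of_mul_eq_mul_right Nat.card_pos hcard).symm

variable (G) in
def solSetoid : Setoid (Sol G) :=
  ⟨Rel G, ⟨Rel.refl, Rel.symm', Rel.trans'⟩⟩

theorem card_dvd_P [Fintype G] : Nat.card G ∣ Nat.card (Sol G) := by
  classical
  letI s : Setoid (Sol G) := solSetoid G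
  have fibEq : ∀ q : Quotient s, Nonempty ({p : Sol G // Quotient.mk s p = q} ≃ G) := by
    intro q
    have e1 : {p : Sol G // Quotient.mk s p = q} ≃ Cl G q.out := by
      apply Equiv.subtypeEquivRight
      intro p
      constructor
      · intro hp
        have : Quotient.mk s p = Quotient.mk s q.out := by rw [hp, Quotient.out_eq]
        exact Rel.symm' (Quotient.exact this)
      · intro hp
        have : Quotient.mk s p = Quotient.mk s q.out := Quotient.sound (Rel.symm' hp)
        rw [this, Quotient.out_eq]
    have e2 : Nat.card {p : Sol G // Quotient.mk s p = q} = Nat.card G := by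
      rw [Nat.card_congr e1, card_Cl]
    haveI : Finite (Sol G) := Subtype.finite
    exact Finite.card_eq.mp e2
  have F : ∀ q : Quotient s, {p : Sol G // Quotient.mk s p = q} ≃ G :=
    fun q => (fibEq q).some
  have e : Sol G ≃ (Quotient s) × G :=
    (Equiv.sigmaFiberEquiv (Quotient.mk s)).symm.trans (Equiv.sigmaEquivProdOfEquiv F)
  rw [Nat.card_congr e, Nat.card_prod]
  exact dvd_mul_left _ _

/-- equivalence of the original system with the simplified one -/
lemma mem_iff (x y : G) :
    (x ^ 2 * y ^ 3 * (x⁻¹ * y⁻¹ * x * y) * y⁻¹ = 1 ∧ (y * x) ^ 2 = 1) ↔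
    (x ^ 4 * y ^ 4 = 1 ∧ (y * x) ^ 2 = 1) := by
  constructor
  · rintro ⟨h1, h2⟩
    refine ⟨?_, h2⟩
    have h3 : x ^ 3 * y ^ 3 = y * x := by
      calc x ^ 3 * y ^ 3
          = x * (x ^ 2 * y ^ 3 * (x⁻¹ * y⁻¹ * x * y) * y⁻¹) * x⁻¹ * y * x := by group
        _ = x * 1 * x⁻¹ * y * x := by rw [h1]
        _ = y * x := by group
    have h5 : (y * x) * (y * x) = 1 := by rw [← pow_two]; exact h2
    calc x ^ 4 * y ^ 4 = x * (x ^ 3 * y ^ 3) * y := by group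
      _ = x * (y * x) * y := by rw [h3]
      _ = x * ((y * x) * (y * x)) * x⁻¹ := by group
      _ = x * 1 * x⁻¹ := by rw [h5]
      _ = 1 := by group
  · rintro ⟨h1, h2⟩
    refine ⟨?_, h2⟩
    have h5 : (y * x) * (y * x) = 1 := by rw [← pow_two]; exact h2
    have h3 : x ^ 3 * y ^ 3 = y * x := by
      calc x ^ 3 * y ^ 3 = x⁻¹ * (x ^ 4 * y ^ 4) * y⁻¹ := by group
        _ = x⁻¹ * 1 * y⁻¹ := by rw [h1]
        _ = (y * x)⁻¹ := by group
        _ = y * x := inv_eq_of_mul_eq_one_left h5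
    calc x ^ 2 * y ^ 3 * (x⁻¹ * y⁻¹ * x * y) * y⁻¹
        = x⁻¹ * (x ^ 3 * y ^ 3) * (x⁻¹ * y⁻¹ * x) := by group
      _ = x⁻¹ * (y * x) * (x⁻¹ * y⁻¹ * x) := by rw [h3]
      _ = 1 := by group

end GRV4

theorem stmt_4 (G : Type*) [Group G] [Fintype G] :
    Nat.card G ∣ Nat.card {p : G × G //
      p.1 ^ 2 * p.2 ^ 3 * (p.1⁻¹ * p.2⁻¹ * p.1 * p.2) * p.2⁻¹ = 1 ∧ (p.2 * p.1) ^ 2 = 1} := by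
  have e : {p : G × G //
      p.1 ^ 2 * p.2 ^ 3 * (p.1⁻¹ * p.2⁻¹ * p.1 * p.2) * p.2⁻¹ = 1 ∧ (p.2 * p.1) ^ 2 = 1}
      ≃ GRV4.Sol G :=
    Equiv.subtypeEquivRight (fun p => GRV4.mem_iff p.1 p.2)
  rw [Nat.card_congr e]
  exact GRV4.card_dvd_P
end

section
/- Let G be a finite group and fix an element g ∈ G. The number of elements x ∈ G such that x^n = g is divisible by gcd(n, |C_G(g)|), where C_G(g) is the centralizer of g (Frobenius-type theorem in the cyclic-equation special case g = 1 and G abelian: the number of x with x^n = 1 is divisible by gcd(n, |G|)). -/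
/-!
The `n`-torsion `{x | x ^ n = 1}` of an abelian group is a subgroup, the kernel of `x ↦ x ^ n`.
For every prime power `p ^ k` dividing `d = gcd(n, |G|)`, Sylow's theorem gives a subgroup of
order `p ^ k`; it is killed by `d`, hence by `n`, so it lies in the kernel and `p ^ k` divides
the kernel's order.
-/

theorem Subgroup.dvd_natCard_of_forall_pow_eq_one_mem {G : Type*} [Group G] [Finite G] {d : ℕ}
    (hd : d ∣ Nat.card G) (K : Subgroup G) (hK : ∀ x : G, x ^ d = 1 → x ∈ K) :
    d ∣ Nat.card K := by
  refine (Nat.dvd_iff_prime_pow_dvd_dvd _ _).mpr fun p k hp hpk ↦ ?_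
  have := Fact.mk hp
  obtain ⟨P, hP⟩ := Sylow.exists_subgroup_card_pow_prime p (hpk.trans hd)
  have hPK : P ≤ K := fun x hx ↦ hK x <| orderOf_dvd_iff_pow_eq_one.mp <|
    (hP ▸ P.orderOf_dvd_natCard hx).trans hpk
  exact hP ▸ Subgroup.card_dvd_of_le hPK

theorem stmt_6_general (G : Type*) [CommGroup G] [Fintype G] (n : ℕ) :
    Nat.gcd n (Nat.card G) ∣ Nat.card {x : G // x ^ n = 1} := by
  refine (powMonoidHom n : G →* G).ker.dvd_natCard_of_forall_pow_eq_one_mem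
    (Nat.gcd_dvd_right _ _) fun x hx ↦ ?_
  obtain ⟨m, hm⟩ := Nat.gcd_dvd_left n (Nat.card G)
  change x ^ n = 1
  rw [hm, pow_mul, hx, one_pow]

theorem stmt_6 (G : Type*) [CommGroup G] [Fintype G] (n : ℕ) (hn : 0 < n) :
    Nat.gcd n (Nat.card G) ∣ Nat.card {x : G // x ^ n = 1} :=
  stmt_6_general G n
end

section
/- Let G be a finite group and n, k positive integers. Define two elements of G to be in the same 'tribe' if their k-th powers are equal. Then the sum over all tribes T of |T|^n is divisible by |G|. -/
/-!
Tuples with equal `k`-th powers are the homomorphisms `Γ →* G` from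
`Γ = ⟨x_i | x_i ^ k = x_j ^ k⟩`. Sending every generator to `1 ∈ ℤ` splits `Γ` as `K ⋊ ℤ`, so such
a homomorphism is a pair `(t, f)` with `f : K →* G` and `t • f = f ∘ σ`, where `σ` is the
conjugation of `K` by a generator and `G` acts on `K →* G` by conjugating values. For a fixed `f`
the admissible `t` form a coset of the stabiliser of `f`, and the set of admissible `f` is stable
under `G`, so every orbit of admissible `f` contributes `|orbit| * |stabiliser| = |G|` pairs.
-/

open Multiplicative MulAction

namespace MulActionHom

variable {G α : Type*} [Group G] [MulAction G α] (T : α →[G] α)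

def mapsIntoOrbit : SubMulAction G α where
  carrier := {a | T a ∈ orbit G a}
  smul_mem' g a := by
    rintro ⟨t, ht⟩
    refine ⟨g * t * g⁻¹, ?_⟩
    simp only [map_smul, ← ht, mul_smul, inv_smul_smul]

lemma mem_mapsIntoOrbit {a : α} : a ∈ T.mapsIntoOrbit ↔ ∃ g : G, g • a = T a := mem_orbit_iff

noncomputable def orbitWitness (a : T.mapsIntoOrbit) : G := (T.mem_mapsIntoOrbit.1 a.2).choose

lemma orbitWitness_smul (a : T.mapsIntoOrbit) : T.orbitWitness a • (a : α) = T a :=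
  (T.mem_mapsIntoOrbit.1 a.2).choose_spec

noncomputable def solutionsEquivSigmaFixedBy :
    {p : G × α // p.1 • p.2 = T p.2} ≃ Σ g : G, fixedBy T.mapsIntoOrbit g where
  toFun p :=
    let a : T.mapsIntoOrbit := ⟨p.1.2, T.mem_mapsIntoOrbit.2 ⟨_, p.2⟩⟩
    ⟨(T.orbitWitness a)⁻¹ * p.1.1, a, Subtype.ext <| by
      simp [a, mul_smul, p.2, inv_smul_eq_iff, T.orbitWitness_smul a]⟩
  invFun q := ⟨(T.orbitWitness q.2 * q.1, q.2.1), by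
      have hq : q.1 • (q.2.1 : α) = q.2.1 := congrArg Subtype.val q.2.2
      rw [mul_smul, hq, T.orbitWitness_smul]⟩
  left_inv p := by simp
  right_inv q := Sigma.subtype_ext (by simp) rfl

theorem card_dvd_card_solutions : Nat.card G ∣ Nat.card {p : G × α // p.1 • p.2 = T p.2} := by
  rw [Nat.card_congr (T.solutionsEquivSigmaFixedBy.trans (sigmaFixedByEquivOrbitsProdGroup G _)),
    Nat.card_prod]
  exact dvd_mul_left _ _

end MulActionHom

namespace MonoidHom

variable {N G : Type*} [Group N] [Group G]

-- Only a local instance: it is not the action one would expect `•` to denote on homomorphisms.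
abbrev conjMulAction : MulAction G (N →* G) where
  smul g f := (MulAut.conj g).toMonoidHom.comp f
  one_smul f := by ext n; show 1 * f n * 1⁻¹ = f n; group
  mul_smul g h f := by ext n; show g * h * f n * (g * h)⁻¹ = g * (h * f n * h⁻¹) * g⁻¹; group

end MonoidHom

attribute [local instance] MonoidHom.conjMulAction

namespace MonoidHom

variable {N G : Type*} [Group N] [Group G]

lemma conj_smul_apply (g : G) (f : N →* G) (n : N) : (g • f) n = g * f n * g⁻¹ := rfl

lemma smul_comp (g : G) (f : N →* G) (σ : N →* N) : (g • f).comp σ = g • f.comp σ := rfl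

def precompMulActionHom (σ : N →* N) : (N →* G) →[G] (N →* G) where
  toFun f := f.comp σ
  map_smul' _ _ := rfl

lemma zpow_smul_eq_comp_zpow {σ : MulAut N} {t : G} {f : N →* G}
    (h : t • f = f.comp σ.toMonoidHom) (a : ℤ) :
    t ^ a • f = f.comp (σ ^ a).toMonoidHom := by
  have h_inv : t⁻¹ • f = f.comp σ⁻¹.toMonoidHom := by
    rw [inv_smul_eq_iff, ← smul_comp, h]
    ext n; simp
  induction a using Int.induction_on with
  | zero => ext; simp
  | succ a ih =>
    rw [zpow_add_one, mul_smul, h, ← smul_comp, ih]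
    ext n; simp [zpow_add_one]
  | pred a ih =>
    rw [zpow_sub_one, mul_smul, h_inv, ← smul_comp, ih]
    ext n; simp [zpow_sub_one]

end MonoidHom

namespace SemidirectProduct

variable {N G : Type*} [Group N] [Group G]

def monoidHomEquiv (φ : Multiplicative ℤ →* MulAut N) :
    (N ⋊[φ] Multiplicative ℤ →* G) ≃
      {p : G × (N →* G) // p.1 • p.2 = p.2.comp (φ (ofAdd 1)).toMonoidHom} where
  toFun F := ⟨(F (inr (ofAdd 1)), F.comp inl), by
    ext n; simp [MonoidHom.conj_smul_apply, ← map_inv, ← map_mul, ← inl_aut]⟩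
  invFun p := lift p.1.2 (zpowersHom G p.1.1) fun z => by
    obtain ⟨a, rfl⟩ : ∃ a : ℤ, ofAdd a = z := ⟨z.toAdd, rfl⟩
    have ha : φ (ofAdd a) = φ (ofAdd 1) ^ a := by
      rw [← map_zpow, ← ofAdd_zsmul, smul_eq_mul, mul_one]
    rw [ha, ← MonoidHom.zpow_smul_eq_comp_zpow p.2, zpowersHom_apply, toAdd_ofAdd]
    rfl
  left_inv F := hom_ext (by simp) (MonoidHom.ext_mint (by simp))
  right_inv p := Subtype.ext (by simp)

end SemidirectProduct

namespace MonoidHom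

variable {Γ : Type*} [Group Γ]

def kerGroupExtension (ψ : Γ →* Multiplicative ℤ) (hψ : Function.Surjective ψ) :
    GroupExtension ψ.ker Γ (Multiplicative ℤ) where
  inl := ψ.ker.subtype
  rightHom := ψ
  inl_injective := Subtype.val_injective
  range_inl_eq_ker_rightHom := ψ.ker.range_subtype
  rightHom_surjective := hψ

noncomputable def kerGroupExtensionSplitting (ψ : Γ →* Multiplicative ℤ)
    (hψ : Function.Surjective ψ) : (kerGroupExtension ψ hψ).Splitting where
  toMonoidHom := zpowersHom Γ (hψ (ofAdd 1)).choose
  rightInverse_rightHom z := by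
    simp [kerGroupExtension, (hψ (ofAdd 1)).choose_spec, ← ofAdd_zsmul]

theorem card_dvd_card_monoidHom_of_surjective {G : Type*} [Group G] (ψ : Γ →* Multiplicative ℤ)
    (hψ : Function.Surjective ψ) : Nat.card G ∣ Nat.card (Γ →* G) := by
  let e := (kerGroupExtensionSplitting ψ hψ).semidirectProductMulEquiv
  rw [Nat.card_congr (e.monoidHomCongrLeftEquiv.symm.trans (SemidirectProduct.monoidHomEquiv _))]
  exact (precompMulActionHom _).card_dvd_card_solutions

end MonoidHom

namespace PresentedGroup

variable {α G : Type*} [Group G]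

def homEquiv (rels : Set (FreeGroup α)) :
    (PresentedGroup rels →* G) ≃ {f : α → G // ∀ r ∈ rels, FreeGroup.lift f r = 1} where
  toFun ρ := ⟨ρ ∘ of, fun r hr => by
    have hρ : ρ.comp (mk rels) = FreeGroup.lift (ρ ∘ of) :=
      FreeGroup.ext_hom _ _ fun _ => (FreeGroup.lift_apply_of ..).symm
    rw [← hρ, MonoidHom.comp_apply, one_of_mem hr, map_one]⟩
  invFun f := toGroup f.2
  left_inv ρ := ext fun _ => toGroup.of _
  right_inv f := Subtype.ext <| funext fun _ => toGroup.of _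

end PresentedGroup

def equalPowersRels (ι : Type*) (k : ℕ) : Set (FreeGroup ι) :=
  Set.range fun p : ι × ι => FreeGroup.of p.1 ^ k * (FreeGroup.of p.2 ^ k)⁻¹

abbrev EqualPowersGroup (ι : Type*) (k : ℕ) := PresentedGroup (equalPowersRels ι k)

namespace EqualPowersGroup

variable {ι G : Type*} [Group G] (k : ℕ)

def homEquiv :
    (EqualPowersGroup ι k →* G) ≃ {v : ι → G // ∀ i j, v i ^ k = v j ^ k} :=
  (PresentedGroup.homEquiv _).trans <| Equiv.subtypeEquivRight fun v => by
    simp only [equalPowersRels, Set.forall_mem_range, Prod.forall, map_mul, map_inv, map_pow,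
      FreeGroup.lift_apply_of, mul_inv_eq_one]

def degree : EqualPowersGroup ι k →* Multiplicative ℤ :=
  PresentedGroup.toGroup (f := fun _ => ofAdd 1) <| by
    rintro _ ⟨⟨i, j⟩, rfl⟩
    simp

lemma degree_surjective [Nonempty ι] : Function.Surjective (degree (ι := ι) k) := fun z =>
  ⟨PresentedGroup.of (Classical.arbitrary ι) ^ z.toAdd, by simp [degree, ← ofAdd_zsmul]⟩

end EqualPowersGroup

theorem stmt_7_general (G : Type*) [Group G] (k n : ℕ) (hn : 0 < n) :
    Nat.card G ∣ Nat.card {v : Fin n → G // ∀ i j, (v i) ^ k = (v j) ^ k} := by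
  have := Fin.pos_iff_nonempty.1 hn
  rw [← Nat.card_congr (EqualPowersGroup.homEquiv k)]
  exact MonoidHom.card_dvd_card_monoidHom_of_surjective _ (EqualPowersGroup.degree_surjective k)

theorem stmt_7 (G : Type*) [Group G] [Fintype G] (k n : ℕ) (hk : 0 < k) (hn : 0 < n) :
    Nat.card G ∣ Nat.card {v : Fin n → G // ∀ i j, (v i) ^ k = (v j) ^ k} :=
  stmt_7_general G k n hn
end

section
/- Let G be a finite group. The number of pairs (x, y) ∈ G² such that x²y² is a cube (i.e., there exists z ∈ G with x²y² = z³) is divisible by |G|. -/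
/-!
Substituting `u = x * y` turns `x² y²` into `(x u x⁻¹) u`, so it suffices to count pairs `(u, x)`
with `x u x⁻¹ u` a cube, and only conjugation-invariance of the set of cubes matters. For fixed
`u` the admissible `x` form a union of left cosets of the centralizer `C(u)`, and their number
depends only on the conjugacy class of `u`. A class has `|G| / |C(u)|` elements, so each class
contributes a multiple of `|G|`.
-/

open MulAction

theorem MulAction.card_dvd_sum_of_card_stabilizer_dvd {G X : Type*} [Group G] [Fintype G]
    [MulAction G X] [Fintype X] (f : X → ℕ) (hf : ∀ (g : G) (x : X), f (g • x) = f x)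
    (hdvd : ∀ x, Nat.card (stabilizer G x) ∣ f x) :
    Nat.card G ∣ ∑ x, f x := by
  classical
  rw [← (selfEquivSigmaOrbits G X).symm.sum_comp, Fintype.sum_sigma]
  refine Finset.dvd_sum fun ω _ => ?_
  have hconst : ∀ y : orbit G ω.out, f y = f ω.out := by
    rintro ⟨_, g, rfl⟩
    exact hf g _
  calc Nat.card G = Nat.card (orbit G ω.out) * Nat.card (stabilizer G ω.out) := by
        rw [← Nat.card_prod, Nat.card_congr (orbitProdStabilizerEquivGroup G ω.out)]
    _ ∣ Nat.card (orbit G ω.out) * f ω.out := mul_dvd_mul_left _ (hdvd _)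
    _ = ∑ y : orbit G ω.out, f y := by simp [hconst, Nat.card_eq_fintype_card]

theorem Subgroup.card_dvd_card_of_mul_mem {G : Type*} [Group G] (H : Subgroup G) (s : Set G)
    (hs : ∀ x ∈ s, ∀ h ∈ H, x * h ∈ s) : Nat.card H ∣ Nat.card s := by
  have hsat : QuotientGroup.mk ⁻¹' ((QuotientGroup.mk : G → G ⧸ H) '' s) = s := by
    refine (QuotientGroup.preimage_image_mk H s).trans (Set.Subset.antisymm ?_ ?_)
    · simp only [Set.iUnion_subset_iff]
      intro h x hx
      simpa using hs _ hx _ (H.inv_mem h.2)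
    · exact fun x hx => Set.mem_iUnion.2 ⟨1, by simpa using hx⟩
  rw [← hsat, QuotientGroup.card_preimage_mk]
  exact dvd_mul_right _ _

section ConjInvariant

variable {G : Type*} [Group G] [Finite G] (P : G → Prop)

theorem card_dvd_card_conj_mul_self (hP : ∀ g a, P a → P (g * a * g⁻¹)) :
    Nat.card G ∣ Nat.card {p : G × G // P (p.2 * p.1 * p.2⁻¹ * p.1)} := by
  have := Fintype.ofFinite G
  have hP' : ∀ g a, P (g * a * g⁻¹) ↔ P a := fun g a =>
    ⟨fun h => by simpa [mul_assoc] using hP g⁻¹ _ h, hP g a⟩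
  rw [Nat.card_congr (Equiv.subtypeProdEquivSigmaSubtype fun u x => P (x * u * x⁻¹ * u)),
    Nat.card_sigma]
  refine card_dvd_sum_of_card_stabilizer_dvd (G := ConjAct G)
    (fun u => Nat.card {x // P (x * u * x⁻¹ * u)}) (fun g u => ?_) (fun u => ?_)
  · refine Nat.card_congr
      (Equiv.subtypeEquiv (MulAut.conj (ConjAct.ofConjAct g)⁻¹).toEquiv fun x => ?_)
    rw [ConjAct.smul_def, ← hP' (ConjAct.ofConjAct g)⁻¹]
    simp only [MulEquiv.toEquiv_eq_coe, EquivLike.coe_coe, MulAut.conj_apply]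
    group
  · rw [← Subgroup.nat_card_centralizer_nat_card_stabilizer]
    refine Subgroup.card_dvd_card_of_mul_mem _ {x | P (x * u * x⁻¹ * u)} fun x hx h hh => ?_
    have hcomm : h * u = u * h := Subgroup.mem_centralizer_singleton_iff.1 hh
    have hconj : x * h * u * (x * h)⁻¹ * u = x * u * x⁻¹ * u := by
      rw [mul_assoc x h, hcomm]
      group
    show P (x * h * u * (x * h)⁻¹ * u)
    rwa [hconj]

theorem card_dvd_card_sq_mul_sq (hP : ∀ g a, P a → P (g * a * g⁻¹)) :
    Nat.card G ∣ Nat.card {p : G × G // P (p.1 ^ 2 * p.2 ^ 2)} := by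
  -- `(x, y) ↦ (x * y, x)`
  let e : G × G ≃ G × G :=
    (Equiv.prodShear (Equiv.refl G) Equiv.mulLeft).trans (Equiv.prodComm G G)
  rw [Nat.card_congr (e.subtypeEquiv fun p => ?_)]
  · exact card_dvd_card_conj_mul_self P hP
  · simp [e, sq, mul_assoc]

end ConjInvariant

theorem stmt_9 (G : Type*) [Group G] [Fintype G] :
    Nat.card G ∣ Nat.card {p : G × G // ∃ z : G, p.1 ^ 2 * p.2 ^ 2 = z ^ 3} :=
  card_dvd_card_sq_mul_sq (fun w => ∃ z : G, w = z ^ 3) fun g _ ⟨z, hz⟩ =>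
    ⟨g * z * g⁻¹, by rw [hz, conj_pow]⟩
end

section
/- Let G be a finite group, H ≤ G, and k an integer. Then the number of group homomorphisms f : ℤ → G with f(k) ∈ H is divisible by |H|. -/
open MulAction Subgroup

/-- Summing an orbit-invariant function whose value at `y` is divisible by the cardinality of
the stabilizer of `y` gives a multiple of the group order. -/
lemma aux_sum_dvd {A Y : Type*} [Group A] [Fintype A] [Fintype Y] [MulAction A Y]
    (f : Y → ℕ) (hf : ∀ (a : A) (y : Y), f (a • y) = f y)
    (hd : ∀ y : Y, Nat.card (stabilizer A y) ∣ f y) :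
    Fintype.card A ∣ ∑ y : Y, f y := by
  classical
  rw [← Finset.sum_fiberwise Finset.univ (fun y => (Quotient.mk (orbitRel A Y) y)) f]
  apply Finset.dvd_sum
  intro q _
  set b := q.out with hb
  have hmem : ∀ y : Y, (Quotient.mk (orbitRel A Y) y = q) ↔ y ∈ orbit A b := by
    intro y
    constructor
    · intro h
      have : Quotient.mk (orbitRel A Y) y = Quotient.mk (orbitRel A Y) b := by
        rw [h, hb, Quotient.out_eq]
      exact Quotient.exact this
    · intro h
      have : Quotient.mk (orbitRel A Y) y = Quotient.mk (orbitRel A Y) b := Quotient.sound h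
      rw [this, hb, Quotient.out_eq]
  have hconst : ∀ y ∈ Finset.univ.filter (fun y => Quotient.mk (orbitRel A Y) y = q), f y = f b := by
    intro y hy
    rw [Finset.mem_filter] at hy
    obtain ⟨a, ha⟩ := (hmem y).mp hy.2
    rw [← ha, hf]
  rw [Finset.sum_congr rfl hconst, Finset.sum_const, smul_eq_mul]
  have hcardfilter : (Finset.univ.filter
      (fun y => Quotient.mk (orbitRel A Y) y = q)).card = Fintype.card (orbit A b) := by
    rw [Fintype.card_of_subtype]
    intro y
    simp only [Finset.mem_filter, Finset.mem_univ, true_and]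
    exact hmem y
  obtain ⟨m, hm⟩ := hd b
  rw [hcardfilter, hm]
  letI : Fintype (stabilizer A b) := Fintype.ofFinite _
  rw [Nat.card_eq_fintype_card, ← mul_assoc, card_orbit_mul_card_stabilizer_eq_card_group A b]
  exact dvd_mul_right _ m

/-- The key theorem, proved by strong induction on the order of `G`:
the order of `H` divides the number of `x` with `x ^ k ∈ H`. -/
theorem aux_key : ∀ (n : ℕ) (G : Type u) [Group G] [Finite G], Nat.card G ≤ n →
    ∀ (H : Subgroup G) (k : ℤ), Nat.card H ∣ Nat.card {x : G // x ^ k ∈ H} := by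
  intro n
  induction n with
  | zero =>
    intro G _ _ hle H k
    have h1 : 0 < Nat.card G := Nat.card_pos
    omega
  | succ n ih =>
    intro G _ _ hle H k
    classical
    by_cases hZ : H ⊓ center G = ⊥
    · -- Case (b) : no nontrivial element of H is central in G.
      letI : Fintype G := Fintype.ofFinite G
      set X := {x : G // x ^ k ∈ H} with hX
      letI act : MulAction H X :=
        { smul := fun h x => ⟨(h : G) * (x : G) * (h : G)⁻¹, by
            rw [conj_zpow]
            exact mul_mem (mul_mem h.2 x.2) (inv_mem h.2)⟩
          one_smul := fun x => Subtype.ext (by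
            show ((1 : H) : G) * (x : G) * ((1 : H) : G)⁻¹ = (x : G)
            simp)
          mul_smul := fun a b x => Subtype.ext (by
            show ((a * b : H) : G) * (x : G) * ((a * b : H) : G)⁻¹ =
              (a : G) * ((b : G) * (x : G) * (b : G)⁻¹) * (a : G)⁻¹
            simp [mul_assoc]) }
      have smul_def : ∀ (h : H) (x : X), ((h • x : X) : G) = (h : G) * (x : G) * (h : G)⁻¹ :=
        fun _ _ => rfl
      -- Burnside
      have hburn : Fintype.card H ∣ ∑ a : H, Fintype.card (fixedBy X a) := by
        rw [MulAction.sum_card_fixedBy_eq_card_orbits_mul_card_group]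
        exact dvd_mul_left _ _
      have hfix1 : Fintype.card (fixedBy X (1 : H)) = Fintype.card X := by
        apply Fintype.card_of_subtype
        intro x
        simp [MulAction.mem_fixedBy]
      -- split off the identity
      have hsplit : ∑ a : H, Fintype.card (fixedBy X a) =
          Fintype.card (fixedBy X (1 : H)) +
            ∑ a ∈ ({(1 : H)}ᶜ : Finset H), Fintype.card (fixedBy X a) :=
        Fintype.sum_eq_add_sum_compl (1 : H) _
      -- the rest of the sum is divisible by |H|
      letI actY : MulAction H {u : H // u ≠ 1} :=
        { smul := fun h u => ⟨h * u * h⁻¹, by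
            intro hc
            exact u.2 (by
              have := congrArg (fun w => h⁻¹ * w * h) hc
              simpa [mul_assoc] using this)⟩
          one_smul := fun u => Subtype.ext (by
            show (1 : H) * (u : H) * (1 : H)⁻¹ = (u : H)
            simp)
          mul_smul := fun a b u => Subtype.ext (by
            show (a * b) * (u : H) * (a * b)⁻¹ = a * (b * (u : H) * b⁻¹) * a⁻¹
            simp [mul_assoc]) }
      have hrest : Fintype.card H ∣
          ∑ a ∈ ({(1 : H)}ᶜ : Finset H), Fintype.card (fixedBy X a) := by
        have hsum : ∑ a ∈ ({(1 : H)}ᶜ : Finset H), Fintype.card (fixedBy X a) =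
            ∑ y : {u : H // u ≠ 1}, Fintype.card (fixedBy X (y : H)) := by
          apply Finset.sum_subtype
          intro x
          simp
        rw [hsum]
        apply aux_sum_dvd (f := fun y : {u : H // u ≠ 1} => Fintype.card (fixedBy X (y : H)))
        · -- invariance under conjugation
          intro h y
          have : fixedBy X ((h • y : {u : H // u ≠ 1}) : H) ≃ fixedBy X (y : H) := by
            refine ⟨fun x => ⟨h⁻¹ • x.1, ?_⟩, fun x => ⟨h • x.1, ?_⟩, fun x => ?_, fun x => ?_⟩
            · have hx : (h * (y : H) * h⁻¹) • (x : X) = (x : X) := x.2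
              show (y : H) • (h⁻¹ • (x : X)) = h⁻¹ • (x : X)
              have := congrArg (fun w => h⁻¹ • w) hx
              simpa [smul_smul, mul_assoc] using this
            · have hx : (y : H) • (x : X) = (x : X) := x.2
              show (h * (y : H) * h⁻¹) • (h • (x : X)) = h • (x : X)
              have := congrArg (fun w => h • w) hx
              simpa [smul_smul, mul_assoc] using this
            · apply Subtype.ext
              show h • (h⁻¹ • (x : X)) = (x : X)
              simp [smul_smul]
            · apply Subtype.ext
              show h⁻¹ • (h • (x : X)) = (x : X)
              simp [smul_smul]
          exact Fintype.card_congr this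
        · -- divisibility via induction in the centralizer
          rintro ⟨u, hu⟩
          have huG : (u : G) ∉ center G := by
            intro hc
            have : (u : G) ∈ H ⊓ center G := ⟨u.2, hc⟩
            rw [hZ] at this
            exact hu (Subtype.ext (by simpa using this))
          set C := centralizer {(u : G)} with hC
          have hCne : C ≠ ⊤ := by
            intro hc
            exact huG (centralizer_eq_top_iff_subset.mp hc rfl)
          have hlt : Nat.card C < Nat.card G := by
            refine lt_of_le_of_ne (card_le_card_group C) (fun hc => hCne (eq_top_of_card_eq _ hc))
          have hdvd := ih C (by omega) (H.subgroupOf C) k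
          -- identify the two sides
          have e1 : {x : C // x ^ k ∈ H.subgroupOf C} ≃ fixedBy X ((⟨u, hu⟩ : {u : H // u ≠ 1}) : H) := by
            refine ⟨fun x => ⟨⟨((x : C) : G), ?_⟩, ?_⟩, fun x => ⟨⟨((x.1 : X) : G), ?_⟩, ?_⟩,
              ?_, ?_⟩
            · have : (((x : C) ^ k : C) : G) ∈ H := x.2
              simpa using this
            · apply Subtype.ext
              show (u : G) * ((x : C) : G) * (u : G)⁻¹ = ((x : C) : G)
              have hcomm : (u : G) * ((x : C) : G) = ((x : C) : G) * (u : G) :=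
                (x : C).2 (u : G) rfl
              rw [hcomm]
              simp [mul_assoc]
            · -- x.1 : X is fixed, so its value lies in the centralizer
              have hfx : (u : G) * ((x.1 : X) : G) * (u : G)⁻¹ = ((x.1 : X) : G) :=
                congrArg Subtype.val x.2
              intro g hg
              rw [Set.mem_singleton_iff] at hg
              subst hg
              have := congrArg (fun w => w * (u : G)) hfx
              simpa [mul_assoc] using this
            · show ((⟨((x.1 : X) : G), _⟩ : C) ^ k : C).1 ∈ H
              simpa using (x.1 : X).2
            · intro x
              rfl
            · intro x
              apply Subtype.ext
              rfl
          have e2 : stabilizer H ((⟨u, hu⟩ : {u : H // u ≠ 1})) ≃ H.subgroupOf C := by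
            refine ⟨fun h => ⟨⟨((h : H) : G), ?_⟩, (h : H).2⟩, fun g => ⟨⟨(g : C), g.2⟩, ?_⟩,
              fun h => ?_, fun g => ?_⟩
            · intro g hg
              rw [Set.mem_singleton_iff] at hg
              subst hg
              have hst : (h : H) * u * (h : H)⁻¹ = u := by
                have := h.2
                have := congrArg Subtype.val this
                exact_mod_cast this
              have : ((h : H) : G) * (u : G) * ((h : H) : G)⁻¹ = (u : G) := by
                exact_mod_cast congrArg (Subtype.val) hst
              have := congrArg (fun w => w * ((h : H) : G)) this
              simpa [mul_assoc] using this.symm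
            · show (⟨(g : C), g.2⟩ : H) • (⟨u, hu⟩ : {u : H // u ≠ 1}) = ⟨u, hu⟩
              apply Subtype.ext
              apply Subtype.ext
              show ((⟨(g : C), g.2⟩ : H) : G) * (u : G) * ((⟨(g : C), g.2⟩ : H) : G)⁻¹ = (u : G)
              have hcomm : (u : G) * ((g : C) : G) = ((g : C) : G) * (u : G) := (g : C).2 (u : G) rfl
              show ((g : C) : G) * (u : G) * ((g : C) : G)⁻¹ = (u : G)
              rw [← hcomm]
              simp [mul_assoc]
            · apply Subtype.ext; apply Subtype.ext; rfl
            · apply Subtype.ext; apply Subtype.ext; rfl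
          calc Nat.card (stabilizer H ((⟨u, hu⟩ : {u : H // u ≠ 1})))
              = Nat.card (H.subgroupOf C) := Nat.card_congr e2
            _ ∣ Nat.card {x : C // x ^ k ∈ H.subgroupOf C} := hdvd
            _ = Fintype.card (fixedBy X ((⟨u, hu⟩ : {u : H // u ≠ 1}) : H)) := by
                rw [Nat.card_congr e1, Nat.card_eq_fintype_card]
      -- conclude
      have htot : Fintype.card H ∣ Fintype.card X := by
        rw [hsplit] at hburn
        rw [← hfix1]
        exact (Nat.dvd_add_iff_left hrest).mpr hburn
      simpa [Nat.card_eq_fintype_card] using htot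
    · -- Case (a) : H contains a nontrivial central element; quotient by Z := H ⊓ center G.
      set Z := H ⊓ center G with hZdef
      have hZle : Z ≤ H := inf_le_left
      have hZc : Z ≤ center G := inf_le_right
      haveI hZn : Z.Normal := by
        constructor
        intro z hz g
        have hcz : ∀ w : G, w * z = z * w := (Subgroup.mem_center_iff.mp (hZc hz))
        have : g * z * g⁻¹ = z := by rw [hcz g]; simp [mul_assoc]
        rwa [this]
      set Q := G ⧸ Z with hQ
      set Hbar := H.map (QuotientGroup.mk' Z) with hHbar
      have hmemiff : ∀ x : G, x ^ k ∈ H ↔ (QuotientGroup.mk x : Q) ^ k ∈ Hbar := by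
        intro x
        have hpow : (QuotientGroup.mk x : Q) ^ k = (QuotientGroup.mk (x ^ k) : Q) :=
          ((QuotientGroup.mk' Z).map_zpow x k).symm
        rw [hpow]
        constructor
        · intro hx
          exact ⟨x ^ k, hx, rfl⟩
        · rintro ⟨h, hh, he⟩
          have he' : (QuotientGroup.mk h : Q) = (QuotientGroup.mk (x ^ k) : Q) := he
          have hmem : h⁻¹ * x ^ k ∈ Z := QuotientGroup.eq.mp he'
          have hx : x ^ k = h * (h⁻¹ * x ^ k) := (mul_inv_cancel_left h (x ^ k)).symm
          rw [hx]
          exact mul_mem hh (hZle hmem)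
      -- counting the solution set
      have hcount : Nat.card {x : G // x ^ k ∈ H} =
          Nat.card Z * Nat.card {y : Q // y ^ k ∈ Hbar} := by
        have e1 : {x : G // x ^ k ∈ H} ≃
            (QuotientGroup.mk ⁻¹' {y : Q | y ^ k ∈ Hbar} : Set G) :=
          Equiv.subtypeEquivRight (fun x => hmemiff x)
        rw [Nat.card_congr e1,
          Nat.card_congr (QuotientGroup.preimageMkEquivSubgroupProdSet Z {y : Q | y ^ k ∈ Hbar}),
          Nat.card_prod]
        rfl
      -- counting H
      have hHcount : Nat.card H = Nat.card Z * Nat.card Hbar := by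
        set f : H →* Q := (QuotientGroup.mk' Z).comp H.subtype with hf
        have hker : f.ker = Z.subgroupOf H := by
          ext x
          rw [MonoidHom.mem_ker, Subgroup.mem_subgroupOf]
          show (QuotientGroup.mk ((x : G)) : Q) = 1 ↔ ((x : G)) ∈ Z
          rw [QuotientGroup.eq_one_iff]
        have hrange : f.range = Hbar := by
          rw [hf, MonoidHom.range_comp, Subgroup.range_subtype]
        have h1 : Nat.card H = Nat.card (H ⧸ f.ker) * Nat.card f.ker :=
          Subgroup.card_eq_card_quotient_mul_card_subgroup _
        rw [h1, Nat.card_congr (QuotientGroup.quotientKerEquivRange f).toEquiv, hrange, hker,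
          Nat.card_congr (subgroupOfEquivOfLe hZle).toEquiv, mul_comm]
      -- the quotient is smaller
      have hQlt : Nat.card Q < Nat.card G := by
        have h1 : Nat.card G = Nat.card Q * Nat.card Z :=
          Subgroup.card_eq_card_quotient_mul_card_subgroup Z
        have h2 : 1 < Nat.card Z := (Subgroup.one_lt_card_iff_ne_bot Z).mpr hZ
        have h3 : 0 < Nat.card Q := Nat.card_pos
        nlinarith
      have := ih Q (by omega) Hbar k
      rw [hcount, hHcount]
      exact mul_dvd_mul_left _ this

theorem stmt_15 (G : Type*) [Group G] [Fintype G] (H : Subgroup G) (k : ℤ) :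
    Nat.card H ∣
      Nat.card {f : Multiplicative ℤ →* G // f (Multiplicative.ofAdd k) ∈ H} := by
  have e : {x : G // x ^ k ∈ H} ≃
      {f : Multiplicative ℤ →* G // f (Multiplicative.ofAdd k) ∈ H} :=
    Equiv.subtypeEquiv (zpowersHom G) (fun x => by
      rw [zpowersHom_apply]
      simp)
  rw [← Nat.card_congr e]
  exact aux_key (Nat.card G) G le_rfl H k
end

section
/- Let G be a finite group and A a conjugation-invariant subset of G (a union of conjugacy classes). Then the number of pairs (x,y) ∈ G² such that (x²y²)·A = A (as a set under left multiplication) is divisible by |G|. -/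
open Finset MulAction


theorem aux_card_dvd {G : Type*} [Group G] [Fintype G] (n : G → ℕ)
    (hconj : ∀ g s : G, n (g * s * g⁻¹) = n s)
    (hcent : ∀ s : G, Nat.card (Subgroup.centralizer ({s} : Set G)) ∣ n s) :
    Fintype.card G ∣ ∑ s : G, n s := by
  classical
  set f : G → Finset G := fun s => univ.filter (fun t => IsConj s t) with hf
  rw [← Finset.sum_fiberwise_of_maps_to
    (fun x _ => Finset.mem_image_of_mem f (mem_univ x)) n]
  refine Finset.dvd_sum ?_
  intro B hB
  obtain ⟨s₀, -, rfl⟩ := Finset.mem_image.mp hB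
  have hfib : ∀ s, f s = f s₀ ↔ IsConj s₀ s := by
    intro s
    constructor
    · intro h
      have h1 : s ∈ f s := by
        simp only [hf, mem_filter, mem_univ, true_and]
        exact IsConj.refl s
      rw [h] at h1
      simp only [hf, mem_filter, mem_univ, true_and] at h1
      exact h1
    · intro h
      ext t
      simp only [hf, mem_filter, mem_univ, true_and]
      exact ⟨fun h2 => h.trans h2, fun h2 => h.symm.trans h2⟩
  have hconst : ∀ s ∈ univ.filter (fun s => f s = f s₀), n s = n s₀ := by
    intro s hs
    rw [mem_filter] at hs
    obtain ⟨c, hc⟩ := isConj_iff.mp ((hfib s).mp hs.2)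
    rw [← hc, hconj]
  rw [Finset.sum_congr rfl hconst, Finset.sum_const, smul_eq_mul]
  obtain ⟨m, hm⟩ := hcent s₀
  have cardstab : Fintype.card (stabilizer (ConjAct G) s₀)
      = Fintype.card (Subgroup.centralizer ({s₀} : Set G)) := by
    refine Fintype.card_congr (Equiv.subtypeEquiv ConjAct.ofConjAct.toEquiv ?_)
    intro g
    show g ∈ stabilizer (ConjAct G) s₀ ↔
      ConjAct.ofConjAct g ∈ Subgroup.centralizer ({s₀} : Set G)
    rw [mem_stabilizer_iff, Subgroup.mem_centralizer_iff, ConjAct.smul_def]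
    constructor
    · intro h h' hh'
      rw [Set.mem_singleton_iff] at hh'
      subst hh'
      exact (mul_inv_eq_iff_eq_mul.mp h).symm
    · intro h
      exact mul_inv_eq_iff_eq_mul.mpr (h s₀ rfl).symm
  have horb : (univ.filter (fun s => f s = f s₀)).card
      = Fintype.card (orbit (ConjAct G) s₀) := by
    rw [← Set.toFinset_card]
    congr 1
    ext t
    simp only [mem_filter, mem_univ, true_and, Set.mem_toFinset, hfib,
      ConjAct.mem_orbit_conjAct]
    exact isConj_comm
  have key : (univ.filter (fun s => f s = f s₀)).card
      * Fintype.card (Subgroup.centralizer ({s₀} : Set G)) = Fintype.card G := by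
    rw [horb, ← cardstab]
    exact card_orbit_mul_card_stabilizer_eq_card_group (ConjAct G) s₀
  refine ⟨m, ?_⟩
  rw [hm, Nat.card_eq_fintype_card, ← mul_assoc, key]

theorem stmt_17 (G : Type*) [Group G] [Fintype G] (A : Set G)
    (hA : ∀ g a, a ∈ A → g⁻¹ * a * g ∈ A) :
    Nat.card G ∣ Nat.card {p : G × G // (fun a => p.1 ^ 2 * p.2 ^ 2 * a) '' A = A} := by
  classical
  set P : G → Prop := fun c => (fun a => c * a) '' A = A with hPdef
  have hA2 : ∀ (g b : G), g⁻¹ * b * g ∈ A ↔ b ∈ A := by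
    intro g b
    constructor
    · intro h
      have h2 := hA g⁻¹ _ h
      have e : (g⁻¹)⁻¹ * (g⁻¹ * b * g) * g⁻¹ = b := by group
      rwa [e] at h2
    · exact hA g b
  have hP : ∀ c, P c ↔ ∀ b, c⁻¹ * b ∈ A ↔ b ∈ A := by
    intro c
    rw [hPdef]
    simp only [Set.ext_iff, Set.mem_image]
    refine forall_congr' fun b => ?_
    constructor
    · intro h
      rw [← h]
      constructor
      · intro hb; exact ⟨c⁻¹ * b, hb, by group⟩
      · rintro ⟨a, ha, rfl⟩
        have e : c⁻¹ * (c * a) = a := by group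
        rwa [e]
    · intro h
      constructor
      · rintro ⟨a, ha, rfl⟩
        rw [← h]
        have e : c⁻¹ * (c * a) = a := by group
        rwa [e]
      · intro hb
        exact ⟨c⁻¹ * b, h.mpr hb, by group⟩
  have hPconj : ∀ g c, P (g * c * g⁻¹) ↔ P c := by
    have key : ∀ g c, P c → P (g * c * g⁻¹) := by
      intro g c hc
      rw [hP] at hc ⊢
      intro b
      rw [← hA2 g ((g * c * g⁻¹)⁻¹ * b)]
      have e : g⁻¹ * ((g * c * g⁻¹)⁻¹ * b) * g = c⁻¹ * (g⁻¹ * b * g) := by group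
      rw [e, hc, hA2]
    intro g c
    refine ⟨fun h => ?_, key g c⟩
    have h2 := key g⁻¹ _ h
    have e : g⁻¹ * (g * c * g⁻¹) * g⁻¹⁻¹ = c := by group
    rwa [e] at h2
  set n : G → ℕ := fun s => (univ.filter fun x => P (x * s * x⁻¹ * s)).card with hn
  -- Step 1: the cardinality equals ∑ s, n s
  have step1 : Nat.card {p : G × G // (fun a => p.1 ^ 2 * p.2 ^ 2 * a) '' A = A}
      = ∑ s : G, n s := by
    rw [Nat.card_eq_fintype_card, Fintype.card_subtype]
    have e1 : (univ.filter fun p : G × G => (fun a => p.1 ^ 2 * p.2 ^ 2 * a) '' A = A).card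
        = (univ.filter fun p : G × G => P (p.1 * p.2 * p.1⁻¹ * p.2)).card := by
      refine Finset.card_bij' (fun p _ => (p.1, p.1 * p.2)) (fun p _ => (p.1, p.1⁻¹ * p.2))
        ?_ ?_ ?_ ?_
      · intro p hp
        simp only [mem_filter, mem_univ, true_and] at hp ⊢
        have e : p.1 * (p.1 * p.2) * p.1⁻¹ * (p.1 * p.2) = p.1 ^ 2 * p.2 ^ 2 := by
          rw [pow_two, pow_two]; group
        rw [e]
        exact hp
      · intro p hp
        simp only [mem_filter, mem_univ, true_and] at hp ⊢
        have e : p.1 ^ 2 * (p.1⁻¹ * p.2) ^ 2 = p.1 * p.2 * p.1⁻¹ * p.2 := by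
          rw [pow_two, pow_two]; group
        rw [e]
        exact hp
      · intro p hp
        simp
      · intro p hp
        simp
    rw [e1]
    rw [Finset.card_eq_sum_card_fiberwise
      (f := fun p : G × G => p.2) (t := univ) (fun x _ => mem_univ _)]
    refine Finset.sum_congr rfl fun s _ => ?_
    refine Finset.card_bij' (fun p _ => p.1) (fun x _ => (x, s)) ?_ ?_ ?_ ?_
    · intro p hp
      simp only [mem_filter, mem_univ, true_and] at hp ⊢
      obtain ⟨h1, h2⟩ := hp
      rw [h2] at h1
      exact h1
    · intro x hx
      simp only [mem_filter, mem_univ, true_and] at hx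
      exact mem_filter.mpr ⟨mem_filter.mpr ⟨mem_univ _, hx⟩, rfl⟩
    · intro p hp
      simp only [mem_filter, mem_univ, true_and] at hp
      exact Prod.ext rfl hp.2.symm
    · intro x hx
      rfl
  rw [step1, Nat.card_eq_fintype_card]
  refine aux_card_dvd n ?_ ?_
  · -- conjugation invariance of n
    intro g s
    refine Finset.card_bij' (fun x _ => g⁻¹ * x * g) (fun x _ => g * x * g⁻¹) ?_ ?_ ?_ ?_
    · intro x hx
      simp only [mem_filter, mem_univ, true_and] at hx ⊢
      rw [← hPconj g]
      have e : g * (g⁻¹ * x * g * s * (g⁻¹ * x * g)⁻¹ * s) * g⁻¹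
          = x * (g * s * g⁻¹) * x⁻¹ * (g * s * g⁻¹) := by group
      rw [e]
      exact hx
    · intro x hx
      simp only [mem_filter, mem_univ, true_and] at hx ⊢
      rw [← hPconj g] at hx
      have e : g * (x * s * x⁻¹ * s) * g⁻¹
          = (g * x * g⁻¹) * (g * s * g⁻¹) * (g * x * g⁻¹)⁻¹ * (g * s * g⁻¹) := by group
      rw [e] at hx
      exact hx
    · intro x hx; group
    · intro x hx; group
  · -- centralizer divisibility
    intro s
    set C : Subgroup G := Subgroup.centralizer ({s} : Set G) with hC
    show Nat.card C ∣ (univ.filter fun x => P (x * s * x⁻¹ * s)).card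
    rw [Finset.card_eq_sum_card_fiberwise
      (f := fun x : G => (QuotientGroup.mk x : G ⧸ C)) (t := univ) (fun x _ => mem_univ _)]
    refine Finset.dvd_sum ?_
    intro b _
    by_cases hemp : ((univ.filter fun x => P (x * s * x⁻¹ * s)).filter
        (fun x => (QuotientGroup.mk x : G ⧸ C) = b)) = ∅
    · rw [hemp]; simp
    · obtain ⟨x₁, hx₁⟩ := Finset.nonempty_of_ne_empty hemp
      simp only [mem_filter, mem_univ, true_and] at hx₁
      obtain ⟨hx₁P, hx₁b⟩ := hx₁
      have hmemC : ∀ x ∈ ((univ.filter fun x => P (x * s * x⁻¹ * s)).filter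
          (fun x => (QuotientGroup.mk x : G ⧸ C) = b)), x₁⁻¹ * x ∈ C := by
        intro x hx
        simp only [mem_filter, mem_univ, true_and] at hx
        rw [← hx₁b] at hx
        exact QuotientGroup.eq.mp hx.2.symm
      have hcard : ((univ.filter fun x => P (x * s * x⁻¹ * s)).filter
          (fun x => (QuotientGroup.mk x : G ⧸ C) = b)).card = Nat.card C := by
        rw [Nat.card_eq_fintype_card, ← Finset.card_univ]
        refine Finset.card_bij' (fun x hx => (⟨x₁⁻¹ * x, hmemC x hx⟩ : C))
          (fun c _ => x₁ * (c : G)) (fun x hx => mem_univ _) ?_ ?_ ?_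
        · intro c _
          refine mem_filter.mpr ⟨mem_filter.mpr ⟨mem_univ _, ?_⟩, ?_⟩
          · have hcs : s * (c : G) = (c : G) * s :=
              Subgroup.mem_centralizer_iff.mp c.2 s rfl
            have e1 : x₁ * (c : G) * s * (x₁ * (c : G))⁻¹ * s
                = x₁ * ((c : G) * s * (c : G)⁻¹) * x₁⁻¹ * s := by group
            have e2 : (c : G) * s * (c : G)⁻¹ = s := by rw [← hcs]; group
            rw [e1, e2]
            exact hx₁P
          · rw [← hx₁b]
            refine (QuotientGroup.eq.mpr ?_)
            have e : (x₁ * (c : G))⁻¹ * x₁ = (c : G)⁻¹ := by group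
            rw [e]
            exact C.inv_mem c.2
        · intro x hx
          simp
        · intro c _
          ext
          simp
      rw [hcard]
end
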